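/- arXiv:1701.05568 — 4 statements merged into one kernel-verified Lean document; each statement's English description precedes it below -/
import Mathlib

section
/- Let f : ℝ → ℂ be integrable. Then the Sokhotskyi–Plemelj integral φ_f is complex-differentiable (holomorphic) at every point λ ∈ ℂ with Im λ ≠ 0; that is, φ_f is differentiable on ℂ \ ℝ. -/
open MeasureTheory Complex Real

/-- The Sokhotskyi–Plemelj (Cauchy) integral of an integrable function
`f : ℝ → ℂ`. -/
noncomputable def sokhotskyiPlemelj (f : ℝ → ℂ) (lam : ℂ) : ℂ :=
  (1 / (2 * (π : ℂ) * Complex.I)) * ∫ x : ℝ, f x / ((x : ℂ) - lam)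

/-- The Sokhotskyi–Plemelj integral of an integrable function is holomorphic
off the real line. -/
theorem sokhotskyiPlemelj_differentiableAt
    (f : ℝ → ℂ) (hf : Integrable f) (lam : ℂ) (hlam : lam.im ≠ 0) :
    DifferentiableAt ℂ (sokhotskyiPlemelj f) lam := by
  set ε : ℝ := |lam.im| / 2 with hεdef
  have him : 0 < |lam.im| := abs_pos.mpr hlam
  have hε : 0 < ε := by positivity
  -- lower bound on the denominator for z in the ball
  have key : ∀ z ∈ Metric.ball lam ε, ∀ a : ℝ, ε ≤ ‖(a : ℂ) - z‖ := by
    intro z hz a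
    have h1 : |z.im - lam.im| ≤ dist z lam := by
      have := Complex.abs_im_le_norm (z - lam)
      simpa [Complex.dist_eq, Complex.sub_im] using this
    have h2 : dist z lam < ε := Metric.mem_ball.mp hz
    have h3 : ε ≤ |z.im| := by
      have : |lam.im| - |z.im| ≤ |z.im - lam.im| := by
        have := abs_sub_abs_le_abs_sub lam.im z.im
        simpa [abs_sub_comm] using this
      have : |lam.im| - |z.im| < ε := lt_of_le_of_lt this (lt_of_le_of_lt h1 h2)
      have : |lam.im| - ε < |z.im| := by linarith
      linarith [show |lam.im| - ε = ε by rw [hεdef]; ring]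
    have h4 : |((a : ℂ) - z).im| ≤ ‖(a : ℂ) - z‖ := Complex.abs_im_le_norm _
    have h5 : ((a : ℂ) - z).im = -z.im := by simp [Complex.sub_im]
    rw [h5, abs_neg] at h4
    linarith
  have hne : ∀ z ∈ Metric.ball lam ε, ∀ a : ℝ, (a : ℂ) - z ≠ 0 := by
    intro z hz a h
    have := key z hz a
    rw [h] at this
    simp at this
    linarith
  have hlam_mem : lam ∈ Metric.ball lam ε := Metric.mem_ball_self hε
  have hmeas : ∀ z : ℂ, AEStronglyMeasurable (fun a : ℝ => f a / ((a : ℂ) - z)) volume := by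
    intro z
    have : AEStronglyMeasurable (fun a : ℝ => f a * (((a : ℂ) - z)⁻¹)) volume :=
      hf.aestronglyMeasurable.mul
        ((Complex.measurable_ofReal.sub measurable_const).inv.aestronglyMeasurable)
    simpa [div_eq_mul_inv] using this
  have main : HasDerivAt (fun z : ℂ => ∫ a : ℝ, f a / ((a : ℂ) - z))
      (∫ a : ℝ, f a / ((a : ℂ) - lam) ^ 2) lam := by
    have := hasDerivAt_integral_of_dominated_loc_of_deriv_le (μ := volume)
      (F := fun z (a : ℝ) => f a / ((a : ℂ) - z))
      (F' := fun z (a : ℝ) => f a / ((a : ℂ) - z) ^ 2)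
      (bound := fun a => ‖f a‖ / ε ^ 2) (x₀ := lam) (Metric.ball_mem_nhds lam hε)
      (Filter.Eventually.of_forall fun z => hmeas z)
      ?_ ?_ ?_ ?_ ?_
    · exact this.2
    · -- integrability at lam
      refine (hf.norm.div_const ε).mono' (hmeas lam) ?_
      filter_upwards with a
      rw [norm_div]
      exact div_le_div_of_nonneg_left (norm_nonneg _) hε (key lam hlam_mem a)
    · have : AEStronglyMeasurable (fun a : ℝ => f a * ((((a : ℂ) - lam) ^ 2)⁻¹)) volume :=
        hf.aestronglyMeasurable.mul
          (((Complex.measurable_ofReal.sub measurable_const).pow_const 2).inv.aestronglyMeasurable)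
      simpa [div_eq_mul_inv] using this
    · filter_upwards with a z hz
      rw [norm_div, norm_pow]
      exact div_le_div_of_nonneg_left (norm_nonneg _) (by positivity)
        (pow_le_pow_left₀ hε.le (key z hz a) 2)
    · exact hf.norm.div_const _
    · filter_upwards with a z hz
      have hz0 : (a : ℂ) - z ≠ 0 := hne z hz a
      have h1 : HasDerivAt (fun w : ℂ => (a : ℂ) - w) (-1) z := by
        simpa using (hasDerivAt_id z).const_sub (a : ℂ)
      have h2 := (h1.inv hz0).const_mul (f a)
      simpa [div_eq_mul_inv, neg_div, neg_neg] using h2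
  have : DifferentiableAt ℂ (fun z : ℂ => ∫ a : ℝ, f a / ((a : ℂ) - z)) lam :=
    main.differentiableAt
  exact (this.const_mul _).congr_of_eventuallyEq (Filter.Eventually.of_forall fun z => rfl)
end

section
/- (Sokhotskyi–Plemelj jump formula, upper radial limit.) Let f : ℝ → ℂ be integrable and let ω₀ ∈ ℝ be a point at which f satisfies a Hölder condition: there exist C > 0 and γ ∈ (0, 1] with |f(x) − f(ω₀)| ≤ C|x − ω₀|^γ for all x with |x − ω₀| ≤ 1. Then the principal-value limit L = lim_{ε→0⁺} (1/(2πi)) ∫_{|x−ω₀|>ε} f(x)/(x − ω₀) dx exists, the radial limit lim_{y→0⁺} φ_f(ω₀ + iy) exists, and lim_{y→0⁺} φ_f(ω₀ + iy) = f(ω₀)/2 + L. -/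
open MeasureTheory Complex Real Filter Topology

open Set

/-!
Write `g = f - f(a) 𝟙_{[a - 1, a + 1]}`. The Hölder condition makes `g(x) / (x - a)` integrable,
so the truncated integrals of `g(x) / (x - a)` and the integrals of `g(x) / (x - (a + iy))`
both converge to `∫ g(x) / (x - a)` by dominated convergence (using `|x - a| ≤ |x - (a + iy)|`).
The subtracted step contributes nothing to the truncated integrals, because `1 / (x - a)` is odd
about `a`, while its Cauchy integral is `f(a) (log(1 - iy) - log(-1 - iy)) → f(a) πi`.
-/

lemma Function.Odd.integral_eq_zero {G E : Type*} [MeasurableSpace G] [AddGroup G]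
    [MeasurableNeg G] [NormedAddCommGroup E] [NormedSpace ℝ E] {μ : Measure G}
    [μ.IsNegInvariant] {k : G → E} (hk : k.Odd) : ∫ x, k x ∂μ = 0 := by
  have h := integral_neg_eq_self k μ
  simp only [hk _, integral_neg] at h
  have h2 : (2 : ℝ) • ∫ x, k x ∂μ = 0 := by
    rw [two_smul]; nth_rw 1 [← h]; exact neg_add_cancel _
  exact (smul_eq_zero.mp h2).resolve_left two_ne_zero

lemma intervalIntegrable_abs_rpow {r : ℝ} (hr : -1 < r) (b c : ℝ) :
    IntervalIntegrable (fun x : ℝ => |x| ^ r) volume b c := by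
  have hpos : ∀ c, 0 ≤ c → IntervalIntegrable (fun x : ℝ => |x| ^ r) volume 0 c := by
    intro c hc
    refine (intervalIntegral.intervalIntegrable_rpow' hr).congr fun x hx => ?_
    rw [uIoc_of_le hc] at hx
    simp only [abs_of_pos hx.1]
  have hfromZero : ∀ c, IntervalIntegrable (fun x : ℝ => |x| ^ r) volume 0 c := by
    intro c
    rcases le_total 0 c with hc | hc
    · exact hpos c hc
    · simpa using (IntervalIntegrable.iff_comp_neg).mp (hpos (-c) (by linarith))
  exact (hfromZero b).symm.trans (hfromZero c)

lemma integrableOn_abs_sub_rpow_Icc {r : ℝ} (hr : -1 < r) (a b c : ℝ) :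
    IntegrableOn (fun x : ℝ => |x - a| ^ r) (Icc b c) := by
  rcases le_or_gt b c with hbc | hcb
  · rw [← intervalIntegrable_iff_integrableOn_Icc_of_le hbc]
    simpa using (intervalIntegrable_abs_rpow hr (b - a) (c - a)).comp_sub_right a
  · rw [Icc_eq_empty hcb.not_ge]
    exact integrableOn_empty

lemma norm_ofReal_sub_ofReal (x a : ℝ) : ‖(x : ℂ) - a‖ = |x - a| := by
  rw [← Complex.ofReal_sub, Complex.norm_real, Real.norm_eq_abs]

lemma mem_Icc_iff_abs_sub_le {x a r : ℝ} : x ∈ Icc (a - r) (a + r) ↔ |x - a| ≤ r := by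
  rw [abs_sub_comm, mem_Icc_iff_abs_le]

lemma abs_sub_re_le_norm_ofReal_sub (x : ℝ) (z : ℂ) : |x - z.re| ≤ ‖(x : ℂ) - z‖ := by
  simpa using abs_re_le_norm ((x : ℂ) - z)

lemma abs_im_le_norm_ofReal_sub (x : ℝ) (z : ℂ) : |z.im| ≤ ‖(x : ℂ) - z‖ := by
  simpa using abs_im_le_norm ((x : ℂ) - z)

lemma MeasureTheory.IntegrableOn.div_ofReal_sub {g : ℝ → ℂ} {s : Set ℝ} {z : ℂ} {δ : ℝ}
    (hg : IntegrableOn g s) (hs : MeasurableSet s) (hδ : 0 < δ)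
    (hsep : ∀ x ∈ s, δ ≤ ‖(x : ℂ) - z‖) :
    IntegrableOn (fun x => g x / ((x : ℂ) - z)) s := by
  refine Integrable.mono' (hg.norm.const_mul δ⁻¹)
    (hg.aestronglyMeasurable.div₀ (by fun_prop)) ?_
  filter_upwards [ae_restrict_of_forall_mem hs hsep] with x hx
  rw [norm_div, ← div_eq_inv_mul]
  exact div_le_div_of_nonneg_left (norm_nonneg _) hδ hx

lemma measurableSet_lt_abs_sub (ε a : ℝ) : MeasurableSet {x : ℝ | ε < |x - a|} :=
  measurableSet_lt measurable_const (by fun_prop)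

lemma setIntegral_lt_abs_sub_inter_Icc_const_div_eq_zero (a ε : ℝ) (c : ℂ) :
    ∫ x in {x : ℝ | ε < |x - a|} ∩ Icc (a - 1) (a + 1), c / ((x : ℂ) - a) = 0 := by
  set S : Set ℝ := {u | ε < |u| ∧ |u| ≤ 1}
  have hodd : (S.indicator fun u : ℝ => c / (u : ℂ)).Odd := by
    intro u
    by_cases hu : u ∈ S
    · have : -u ∈ S := by simpa [S, abs_neg] using hu
      simp [indicator_of_mem hu, indicator_of_mem this, div_neg]
    · have : -u ∉ S := by simpa [S, abs_neg] using hu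
      simp [indicator_of_notMem hu, indicator_of_notMem this]
  calc _ = ∫ x, S.indicator (fun u : ℝ => c / (u : ℂ)) (x - a) := by
        rw [← integral_indicator ((measurableSet_lt_abs_sub ε a).inter measurableSet_Icc)]
        congr 1 with x
        simp only [indicator_apply, S, mem_inter_iff, mem_ofPred_eq, mem_Icc_iff_abs_sub_le]
        push_cast
        rfl
    _ = 0 := by rw [integral_sub_right_eq_self]; exact hodd.integral_eq_zero

lemma tendsto_setIntegral_lt_abs_sub {E : Type*} [NormedAddCommGroup E] [NormedSpace ℝ E]
    {h : ℝ → E} (hh : Integrable h) (a : ℝ) :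
    Tendsto (fun ε => ∫ x in {x | ε < |x - a|}, h x) (𝓝[>] 0) (𝓝 (∫ x, h x)) := by
  simp_rw [← integral_indicator (measurableSet_lt_abs_sub _ a)]
  refine tendsto_integral_filter_of_dominated_convergence (‖h ·‖)
    (.of_forall fun ε => hh.aestronglyMeasurable.indicator (measurableSet_lt_abs_sub ε a))
    (.of_forall fun ε => .of_forall fun x => norm_indicator_le_norm_self h x) hh.norm ?_
  filter_upwards [compl_mem_ae_iff.mpr (measure_singleton a)] with x hx
  have hpos : 0 < |x - a| := abs_pos.mpr (sub_ne_zero.mpr hx)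
  refine tendsto_const_nhds.congr' ?_
  filter_upwards [Ioo_mem_nhdsGT hpos] with ε hε
  exact (indicator_of_mem (show x ∈ {x | ε < |x - a|} from hε.2) h).symm

lemma tendsto_integral_div_ofReal_sub_add_mul_I {a : ℝ} {g : ℝ → ℂ}
    (hg : AEStronglyMeasurable g)
    (hint : Integrable (fun x : ℝ => g x / ((x : ℂ) - a))) :
    Tendsto (fun y : ℝ => ∫ x : ℝ, g x / ((x : ℂ) - (a + y * I))) (𝓝 0)
      (𝓝 (∫ x : ℝ, g x / ((x : ℂ) - a))) := by
  have hae : ∀ᵐ x ∂volume, x ≠ a := compl_mem_ae_iff.mpr (measure_singleton a)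
  refine tendsto_integral_filter_of_dominated_convergence (fun x => ‖g x / ((x : ℂ) - a)‖)
    (.of_forall fun y => hg.div₀ (by fun_prop)) (.of_forall fun y => ?_) hint.norm ?_
  · filter_upwards [hae] with x hx
    have hpos : 0 < |x - a| := abs_pos.mpr (sub_ne_zero.mpr hx)
    rw [norm_div, norm_div, norm_ofReal_sub_ofReal]
    gcongr
    simpa using abs_sub_re_le_norm_ofReal_sub x (a + y * I)
  · filter_upwards [hae] with x hx
    have hne : (x : ℂ) - a ≠ 0 := sub_ne_zero.mpr (ofReal_injective.ne hx)
    refine tendsto_const_nhds.div ?_ hne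
    simpa using ((by fun_prop : Continuous fun y : ℝ => (x : ℂ) - (a + y * I)).tendsto 0)

lemma integral_Icc_inv_ofReal_sub (a : ℝ) {y : ℝ} (hy : y ≠ 0) :
    ∫ x in Icc (a - 1) (a + 1), ((x : ℂ) - (a + y * I))⁻¹ =
      Complex.log (1 - y * I) - Complex.log (-1 - y * I) := by
  have hslit : ∀ u : ℝ, (u : ℂ) - (a + y * I) ∈ slitPlane := fun u =>
    mem_slitPlane_iff.mpr (Or.inr (by simpa using hy))
  have hderiv : ∀ u ∈ uIcc (a - 1) (a + 1), HasDerivAt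
      (fun u : ℝ => Complex.log ((u : ℂ) - (a + y * I))) ((u : ℂ) - (a + y * I))⁻¹ u :=
    fun u _ => by
      simpa using ((hasDerivAt_id (u : ℂ)).sub_const (a + y * I)).comp_ofReal.clog_real (hslit u)
  have hcont : Continuous fun x : ℝ => ((x : ℂ) - (a + y * I))⁻¹ :=
    (by fun_prop : Continuous fun x : ℝ => (x : ℂ) - (a + y * I)).inv₀
      fun u => slitPlane_ne_zero (hslit u)
  rw [integral_Icc_eq_integral_Ioc, ← intervalIntegral.integral_of_le (by linarith),
    intervalIntegral.integral_eq_sub_of_hasDerivAt hderiv (hcont.intervalIntegrable _ _)]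
  push_cast
  ring_nf

lemma tendsto_integral_Icc_inv_ofReal_sub (a : ℝ) :
    Tendsto (fun y : ℝ => ∫ x in Icc (a - 1) (a + 1), ((x : ℂ) - (a + y * I))⁻¹) (𝓝[>] 0)
      (𝓝 (π * I)) := by
  have hline : ∀ w : ℂ, Tendsto (fun y : ℝ => w - y * I) (𝓝[>] 0) (𝓝 w) := fun w => by
    simpa using ((by fun_prop : Continuous fun y : ℝ => w - y * I).tendsto 0).mono_left
      nhdsWithin_le_nhds
  have hright : Tendsto (fun y : ℝ => Complex.log (1 - y * I)) (𝓝[>] 0) (𝓝 0) := by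
    simpa [Function.comp_def] using (continuousAt_clog one_mem_slitPlane).tendsto.comp (hline 1)
  have hleft : Tendsto (fun y : ℝ => Complex.log (-1 - y * I)) (𝓝[>] 0) (𝓝 (-(π * I))) := by
    have hbelow : Tendsto (fun y : ℝ => -1 - y * I) (𝓝[>] 0) (𝓝[{z | z.im < 0}] (-1)) :=
      tendsto_nhdsWithin_iff.mpr ⟨hline (-1), eventually_nhdsWithin_of_forall fun y hy => by
        simpa using hy⟩
    simpa [Function.comp_def] using
      (tendsto_log_nhdsWithin_im_neg_of_re_neg_of_im_zero (by simp) (by simp)).comp hbelow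
  refine (by simpa using hright.sub hleft : Tendsto _ _ (𝓝 (π * I))).congr' ?_
  filter_upwards [self_mem_nhdsWithin] with y hy
  exact (integral_Icc_inv_ofReal_sub a (ne_of_gt hy)).symm

lemma integrable_indicator_Icc_const (a : ℝ) (c : ℂ) :
    Integrable ((Icc (a - 1) (a + 1)).indicator (fun _ => c)) :=
  (integrable_indicator_iff measurableSet_Icc).mpr (integrableOn_const measure_Icc_lt_top.ne)

noncomputable def localRemainder (f : ℝ → ℂ) (a x : ℝ) : ℂ :=
  f x - (Icc (a - 1) (a + 1)).indicator (fun _ => f a) x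

section LocalRemainder

variable {f : ℝ → ℂ} {a : ℝ}

lemma localRemainder_of_mem {x : ℝ} (hx : x ∈ Icc (a - 1) (a + 1)) :
    localRemainder f a x = f x - f a := by
  rw [localRemainder, indicator_of_mem hx]

lemma MeasureTheory.Integrable.localRemainder (hf : Integrable f) (a : ℝ) :
    Integrable (localRemainder f a) :=
  hf.sub (integrable_indicator_Icc_const a (f a))

lemma integrable_localRemainder_div_ofReal_sub (hf : Integrable f) {C γ : ℝ} (hγ : 0 < γ)
    (hHolder : ∀ x : ℝ, |x - a| ≤ 1 → ‖f x - f a‖ ≤ C * |x - a| ^ γ) :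
    Integrable (fun x : ℝ => localRemainder f a x / ((x : ℂ) - a)) := by
  have hint := hf.localRemainder a
  rw [← integrableOn_univ, ← union_compl_self (Icc (a - 1) (a + 1))]
  refine IntegrableOn.union ?_ ?_
  · refine Integrable.mono'
      ((integrableOn_abs_sub_rpow_Icc (r := γ - 1) (by linarith) a _ _).const_mul C)
      (hint.aestronglyMeasurable.div₀ (by fun_prop)).restrict ?_
    have hae : ∀ᵐ x ∂volume, x ≠ a := measure_singleton a |> compl_mem_ae_iff.mpr
    filter_upwards [ae_restrict_mem measurableSet_Icc, ae_restrict_of_ae hae] with x hx hxa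
    have hpos : 0 < |x - a| := abs_pos.mpr (sub_ne_zero.mpr hxa)
    rw [localRemainder_of_mem hx, norm_div, norm_ofReal_sub_ofReal, rpow_sub_one hpos.ne',
      ← mul_div_assoc]
    exact div_le_div_of_nonneg_right (hHolder x (mem_Icc_iff_abs_sub_le.mp hx)) hpos.le
  · refine hint.integrableOn.div_ofReal_sub measurableSet_Icc.compl one_pos fun x hx => ?_
    rw [norm_ofReal_sub_ofReal]
    exact (not_le.mp (mt mem_Icc_iff_abs_sub_le.mpr hx)).le

lemma setIntegral_lt_abs_sub_div_eq_localRemainder (hf : Integrable f) {ε : ℝ} (hε : 0 < ε) :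
    ∫ x in {x | ε < |x - a|}, f x / ((x : ℂ) - a) =
      ∫ x in {x | ε < |x - a|}, localRemainder f a x / ((x : ℂ) - a) := by
  have hT := measurableSet_lt_abs_sub ε a
  have hsep : ∀ x ∈ {x | ε < |x - a|}, ε ≤ ‖(x : ℂ) - a‖ := fun x hx => by
    rw [norm_ofReal_sub_ofReal]; exact le_of_lt hx
  have hdiv : ∀ x : ℝ, (f x - localRemainder f a x) / ((x : ℂ) - a) =
      (Icc (a - 1) (a + 1)).indicator (fun x : ℝ => f a / ((x : ℂ) - a)) x := fun x => by
    by_cases hx : x ∈ Icc (a - 1) (a + 1) <;> simp [localRemainder, hx]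
  rw [← sub_eq_zero, ← integral_sub (hf.integrableOn.div_ofReal_sub hT hε hsep)
    ((hf.localRemainder a).integrableOn.div_ofReal_sub hT hε hsep)]
  simp_rw [← sub_div, hdiv]
  rw [setIntegral_indicator measurableSet_Icc]
  exact setIntegral_lt_abs_sub_inter_Icc_const_div_eq_zero a ε (f a)

lemma tendsto_principalValue (hf : Integrable f)
    (hint : Integrable (fun x : ℝ => localRemainder f a x / ((x : ℂ) - a))) :
    Tendsto (fun ε => ∫ x in {x | ε < |x - a|}, f x / ((x : ℂ) - a)) (𝓝[>] 0)
      (𝓝 (∫ x, localRemainder f a x / ((x : ℂ) - a))) :=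
  (tendsto_setIntegral_lt_abs_sub hint a).congr' <| eventually_nhdsWithin_of_forall
    fun _ hε => (setIntegral_lt_abs_sub_div_eq_localRemainder hf hε).symm

lemma integral_div_ofReal_sub_eq_localRemainder_add (hf : Integrable f) {z : ℂ}
    (hz : z.im ≠ 0) :
    ∫ x : ℝ, f x / ((x : ℂ) - z) =
      (∫ x : ℝ, localRemainder f a x / ((x : ℂ) - z)) +
        f a * ∫ x in Icc (a - 1) (a + 1), ((x : ℂ) - z)⁻¹ := by
  have hdiv : ∀ {g : ℝ → ℂ}, Integrable g → Integrable (fun x : ℝ => g x / ((x : ℂ) - z)) :=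
    fun hg => integrableOn_univ.mp <| hg.integrableOn.div_ofReal_sub MeasurableSet.univ
      (abs_pos.mpr hz) fun x _ => abs_im_le_norm_ofReal_sub x z
  calc ∫ x : ℝ, f x / ((x : ℂ) - z)
      = ∫ x : ℝ, (localRemainder f a x / ((x : ℂ) - z) +
          (Icc (a - 1) (a + 1)).indicator (fun _ => f a) x / ((x : ℂ) - z)) := by
        congr 1 with x
        rw [← add_div, localRemainder, sub_add_cancel]
    _ = (∫ x : ℝ, localRemainder f a x / ((x : ℂ) - z)) +
          ∫ x : ℝ, (Icc (a - 1) (a + 1)).indicator (fun _ => f a) x / ((x : ℂ) - z) :=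
        integral_add (hdiv (hf.localRemainder a)) (hdiv (integrable_indicator_Icc_const a (f a)))
    _ = _ := by
        rw [← integral_const_mul, ← integral_indicator measurableSet_Icc]
        congr 2 with x
        by_cases hx : x ∈ Icc (a - 1) (a + 1) <;> simp [hx, div_eq_mul_inv]

end LocalRemainder

theorem sokhotskyiPlemelj_jump_upper_general
    (f : ℝ → ℂ) (hf : Integrable f) (ω₀ : ℝ)
    (C γ : ℝ) (hγ : γ ∈ Set.Ioc (0 : ℝ) 1)
    (hHolder : ∀ x : ℝ, |x - ω₀| ≤ 1 → ‖f x - f ω₀‖ ≤ C * |x - ω₀| ^ γ) :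
    ∃ L : ℂ,
      Tendsto (fun ε : ℝ =>
          (1 / (2 * (π : ℂ) * Complex.I)) *
            ∫ x in {x : ℝ | ε < |x - ω₀|}, f x / ((x : ℂ) - ω₀))
        (𝓝[>] 0) (𝓝 L) ∧
      Tendsto (fun y : ℝ => sokhotskyiPlemelj f ((ω₀ : ℂ) + y * Complex.I))
        (𝓝[>] 0) (𝓝 (f ω₀ / 2 + L)) := by
  have hint := integrable_localRemainder_div_ofReal_sub hf hγ.1 hHolder
  set c : ℂ := 1 / (2 * (π : ℂ) * I) with hc
  set L : ℂ := ∫ x, localRemainder f ω₀ x / ((x : ℂ) - ω₀)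
  refine ⟨c * L, (tendsto_principalValue hf hint).const_mul c, ?_⟩
  have hlim := ((tendsto_integral_div_ofReal_sub_add_mul_I
    (hf.localRemainder ω₀).aestronglyMeasurable hint |>.mono_left nhdsWithin_le_nhds).add
    ((tendsto_integral_Icc_inv_ofReal_sub ω₀).const_mul (f ω₀))).const_mul c
  have hval : c * (L + f ω₀ * (π * I)) = f ω₀ / 2 + c * L := by
    have : (π : ℂ) * I ≠ 0 := mul_ne_zero (ofReal_ne_zero.mpr pi_ne_zero) I_ne_zero
    rw [hc]
    field_simp
    ring
  rw [hval] at hlim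
  refine hlim.congr' (eventually_nhdsWithin_of_forall fun y hy => ?_)
  dsimp only
  rw [sokhotskyiPlemelj, integral_div_ofReal_sub_eq_localRemainder_add hf (by simpa using hy.ne')]

/-- Sokhotskyi–Plemelj jump formula (upper radial limit): if `f` is integrable
and Hölder at `ω₀`, then the principal-value integral
`L = lim_{ε→0⁺} (1/(2πi)) ∫_{|x−ω₀|>ε} f(x)/(x−ω₀) dx` exists, the upper radial
limit of `φ_f` at `ω₀` exists, and it equals `f(ω₀)/2 + L`. -/
theorem sokhotskyiPlemelj_jump_upper
    (f : ℝ → ℂ) (hf : Integrable f) (ω₀ : ℝ)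
    (C γ : ℝ) (hC : 0 < C) (hγ : γ ∈ Set.Ioc (0 : ℝ) 1)
    (hHolder : ∀ x : ℝ, |x - ω₀| ≤ 1 → ‖f x - f ω₀‖ ≤ C * |x - ω₀| ^ γ) :
    ∃ L : ℂ,
      Tendsto (fun ε : ℝ =>
          (1 / (2 * (π : ℂ) * Complex.I)) *
            ∫ x in {x : ℝ | ε < |x - ω₀|}, f x / ((x : ℂ) - ω₀))
        (𝓝[>] 0) (𝓝 L) ∧
      Tendsto (fun y : ℝ => sokhotskyiPlemelj f ((ω₀ : ℂ) + y * Complex.I))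
        (𝓝[>] 0) (𝓝 (f ω₀ / 2 + L)) :=
  sokhotskyiPlemelj_jump_upper_general f hf ω₀ C γ hγ hHolder
end

section
/- (Multiplicative Riemann–Hilbert factorization via Sokhotskyi–Plemelj integrals.) Let f : ℝ → ℂ be integrable and let ω₀ ∈ ℝ be a point at which f satisfies a Hölder condition: there exist C > 0 and γ ∈ (0, 1] with |f(x) − f(ω₀)| ≤ C|x − ω₀|^γ for all x with |x − ω₀| ≤ 1. Define Φ⁺(λ) = exp(φ_f(λ)) for Im λ > 0 and Φ⁻(λ) = exp(−φ_f(λ)) for Im λ < 0. Then lim_{y→0⁺} Φ⁺(ω₀ + iy) · Φ⁻(ω₀ − iy) = e^{f(ω₀)}. In particular, if f = ln g for a continuous non-vanishing function g, the radial limits of Φ⁺ and Φ⁻ solve the homogeneous Riemann–Hilbert problem Φ⁺(ω)Φ⁻(ω) = g(ω) at ω = ω₀. -/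
/-!
The product `Φ⁺(ω₀ + iy) Φ⁻(ω₀ - iy)` is the exponential of the jump
`φ_f(ω₀ + iy) - φ_f(ω₀ - iy)`, and the jump of the Cauchy kernel across the real line is the
Poisson kernel, i.e. the density of the Cauchy distribution with location `ω₀` and scale `y`.
These densities are rescalings of a single integrable bump, so they form an approximate
identity as `y → 0⁺`: the jump tends to `f ω₀` for integrable `f` continuous at `ω₀`, and the
Hölder condition gives that continuity.
-/

open MeasureTheory Complex Real Filter Topology

open ProbabilityTheory
open scoped NNReal

lemma continuousAt_of_norm_sub_le_mul_abs_rpow {E : Type*} [SeminormedAddCommGroup E]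
    {f : ℝ → E} {x₀ C γ : ℝ} (hγ : 0 < γ)
    (h : ∀ᶠ x in 𝓝 x₀, ‖f x - f x₀‖ ≤ C * |x - x₀| ^ γ) : ContinuousAt f x₀ := by
  rw [ContinuousAt, tendsto_iff_norm_sub_tendsto_zero]
  refine squeeze_zero' (.of_forall fun _ => norm_nonneg _) h ?_
  have hbound : Tendsto (fun x => C * |x - x₀| ^ γ) (𝓝 x₀) (𝓝 (C * |x₀ - x₀| ^ γ)) :=
    ((continuous_abs.comp (continuous_sub_right x₀)).rpow_const
      fun _ => Or.inr hγ.le).const_mul C |>.tendsto x₀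
  simpa [Real.zero_rpow hγ.ne'] using hbound

lemma cauchyPDFReal_inv_eq_mul_cauchyPDFReal_zero_one (x₀ : ℝ) {c : ℝ≥0} (hc : c ≠ 0)
    (x : ℝ) : cauchyPDFReal x₀ c⁻¹ x = c * cauchyPDFReal 0 1 (c * (x₀ - x)) := by
  have hc' : (c : ℝ) ≠ 0 := by exact_mod_cast hc
  simp only [cauchyPDFReal_def, NNReal.coe_inv, NNReal.coe_one]
  field_simp
  ring

lemma tendsto_norm_mul_cauchyPDFReal_zero_one_cobounded :
    Tendsto (fun x : ℝ => ‖x‖ * cauchyPDFReal 0 1 x) (Bornology.cobounded ℝ) (𝓝 0) := by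
  have hdecay : Tendsto (fun x : ℝ => π⁻¹ * ‖x‖⁻¹) (Bornology.cobounded ℝ) (𝓝 0) := by
    simpa using
      (tendsto_inv_atTop_zero.comp (tendsto_norm_cobounded_atTop (E := ℝ))).const_mul π⁻¹
  refine squeeze_zero' (.of_forall fun x => ?_) (.of_forall fun x => ?_) hdecay
  · exact mul_nonneg (norm_nonneg x) (cauchyPDF_pos 0 one_ne_zero x).le
  · rcases eq_or_ne x 0 with rfl | hx
    · simp
    have hx' : 0 < |x| := abs_pos.mpr hx
    simp only [cauchyPDFReal_def, Real.norm_eq_abs, sub_zero, NNReal.coe_one, one_pow, mul_one,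
      ← sq_abs x]
    field_simp
    nlinarith

theorem tendsto_integral_cauchyPDFReal_smul {E : Type*} [NormedAddCommGroup E]
    [NormedSpace ℝ E] [CompleteSpace E] {g : ℝ → E} (hg : Integrable g) {x₀ : ℝ}
    (hcont : ContinuousAt g x₀) :
    Tendsto (fun y : ℝ => ∫ x, cauchyPDFReal x₀ y.toNNReal x • g x) (𝓝[>] 0) (𝓝 (g x₀)) := by
  have hpeak := (tendsto_integral_comp_smul_smul_of_integrable'
    (fun x => (cauchyPDF_pos 0 one_ne_zero x).le) (integral_cauchyPDFReal_eq_one 0 one_ne_zero)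
    (by simpa using tendsto_norm_mul_cauchyPDFReal_zero_one_cobounded) hg hcont).comp
    tendsto_inv_nhdsGT_zero
  refine hpeak.congr' ?_
  filter_upwards [self_mem_nhdsWithin] with y (hy : 0 < y)
  have hscale := cauchyPDFReal_inv_eq_mul_cauchyPDFReal_zero_one x₀ (c := y⁻¹.toNNReal)
    (by simpa using hy)
  simp only [Real.toNNReal_inv, inv_inv] at hscale
  simp only [Function.comp_apply, Module.finrank_self, pow_one, smul_eq_mul, hscale,
    NNReal.coe_inv, Real.coe_toNNReal _ hy.le]

lemma integrable_div_ofReal_sub {f : ℝ → ℂ} (hf : Integrable f) {lam : ℂ} (hlam : lam.im ≠ 0) :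
    Integrable (fun x : ℝ => f x / ((x : ℂ) - lam)) := by
  refine (hf.norm.mul_const |lam.im|⁻¹).mono' ?_ (.of_forall fun x => ?_)
  · exact hf.aestronglyMeasurable.div₀
      (continuous_ofReal.sub continuous_const).aestronglyMeasurable
  · have hle : |lam.im| ≤ ‖(x : ℂ) - lam‖ := by
      simpa using abs_im_le_norm ((x : ℂ) - lam)
    rw [norm_div, div_eq_mul_inv]
    gcongr

lemma ofReal_cauchyPDFReal_eq_cauchyKernel_jump (x₀ : ℝ) {y : ℝ} (hy : 0 < y) (x : ℝ) :
    (cauchyPDFReal x₀ y.toNNReal x : ℂ) = 1 / (2 * (π : ℂ) * I) *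
      (1 / ((x : ℂ) - (x₀ + y * I)) - 1 / ((x : ℂ) - (x₀ - y * I))) := by
  have hplus : (x : ℂ) - (x₀ + y * I) ≠ 0 := fun h => by simpa [hy.ne'] using congrArg im h
  have hminus : (x : ℂ) - (x₀ - y * I) ≠ 0 := fun h => by simpa [hy.ne'] using congrArg im h
  have hprod : ((x : ℂ) - (x₀ + y * I)) * ((x : ℂ) - (x₀ - y * I)) =
      ((x - x₀) ^ 2 + y ^ 2 : ℝ) := by
    push_cast
    linear_combination -(y : ℂ) ^ 2 * I_sq
  have hpos : ((x - x₀) ^ 2 + y ^ 2 : ℝ) ≠ 0 := by positivity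
  rw [cauchyPDFReal_def, Real.coe_toNNReal _ hy.le, div_sub_div _ _ hplus hminus, hprod]
  push_cast at hpos ⊢
  field_simp
  ring

lemma sokhotskyiPlemelj_sub_eq_integral_cauchyPDFReal_smul {f : ℝ → ℂ} (hf : Integrable f)
    (x₀ : ℝ) {y : ℝ} (hy : 0 < y) :
    sokhotskyiPlemelj f (x₀ + y * I) - sokhotskyiPlemelj f (x₀ - y * I) =
      ∫ x, cauchyPDFReal x₀ y.toNNReal x • f x := by
  have hplus := integrable_div_ofReal_sub hf (lam := x₀ + y * I) (by simpa using hy.ne')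
  have hminus := integrable_div_ofReal_sub hf (lam := x₀ - y * I) (by simpa using hy.ne')
  rw [sokhotskyiPlemelj, sokhotskyiPlemelj, ← mul_sub, ← integral_sub hplus hminus,
    ← integral_const_mul]
  refine integral_congr_ae (.of_forall fun x => ?_)
  simp only [real_smul, ofReal_cauchyPDFReal_eq_cauchyKernel_jump x₀ hy x]
  ring

theorem sokhotskyiPlemelj_riemannHilbert_factorization_general
    (f : ℝ → ℂ) (hf : Integrable f) (ω₀ : ℝ)
    (C γ : ℝ) (hγ : γ ∈ Set.Ioc (0 : ℝ) 1)
    (hHolder : ∀ x : ℝ, |x - ω₀| ≤ 1 → ‖f x - f ω₀‖ ≤ C * |x - ω₀| ^ γ) :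
    Tendsto (fun y : ℝ =>
        Complex.exp (sokhotskyiPlemelj f ((ω₀ : ℂ) + y * Complex.I)) *
          Complex.exp (-sokhotskyiPlemelj f ((ω₀ : ℂ) - y * Complex.I)))
      (𝓝[>] 0) (𝓝 (Complex.exp (f ω₀))) := by
  have hcont : ContinuousAt f ω₀ := continuousAt_of_norm_sub_le_mul_abs_rpow hγ.1 <|
    eventually_of_mem (Metric.closedBall_mem_nhds ω₀ zero_lt_one) hHolder
  have hjump := tendsto_integral_cauchyPDFReal_smul hf hcont
  refine ((Complex.continuous_exp.tendsto _).comp hjump).congr' ?_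
  filter_upwards [self_mem_nhdsWithin] with y (hy : 0 < y)
  rw [Function.comp_apply, ← sokhotskyiPlemelj_sub_eq_integral_cauchyPDFReal_smul hf ω₀ hy,
    sub_eq_add_neg, Complex.exp_add]

/-- Multiplicative Riemann–Hilbert factorization via Sokhotskyi–Plemelj
integrals: if `f` is integrable and Hölder at `ω₀`, and
`Φ⁺(λ) = exp(φ_f(λ))`, `Φ⁻(λ) = exp(−φ_f(λ))`, then
`lim_{y→0⁺} Φ⁺(ω₀ + iy) · Φ⁻(ω₀ − iy) = e^{f(ω₀)}`. -/
theorem sokhotskyiPlemelj_riemannHilbert_factorization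
    (f : ℝ → ℂ) (hf : Integrable f) (ω₀ : ℝ)
    (C γ : ℝ) (hC : 0 < C) (hγ : γ ∈ Set.Ioc (0 : ℝ) 1)
    (hHolder : ∀ x : ℝ, |x - ω₀| ≤ 1 → ‖f x - f ω₀‖ ≤ C * |x - ω₀| ^ γ) :
    Tendsto (fun y : ℝ =>
        Complex.exp (sokhotskyiPlemelj f ((ω₀ : ℂ) + y * Complex.I)) *
          Complex.exp (-sokhotskyiPlemelj f ((ω₀ : ℂ) - y * Complex.I)))
      (𝓝[>] 0) (𝓝 (Complex.exp (f ω₀))) :=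
  sokhotskyiPlemelj_riemannHilbert_factorization_general f hf ω₀ C γ hγ hHolder
end

section
/- For every α ∈ (−1, 1) and every ω ∈ ℝ, the function x ↦ e^{iωx} e^{αx} sech(x) is integrable on ℝ and ∫_ℝ e^{iωx} e^{αx} sech(x) dx = π / cosh(π(ω − iα)/2). Consequently, the characteristic exponent of the compound Poisson process with jump measure ν(dx) = e^{αx} sech(x) dx, namely ψ(ω) = ∫_ℝ (e^{iωx} − 1) e^{αx} sech(x) dx, equals π/cosh(π(ω − iα)/2) − π/cos(πα/2). -/
open MeasureTheory Complex Real

/-!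
The substitution `y = σ(2x) = eˣ / (2 cosh x)`, where `σ` is the logistic sigmoid, maps `ℝ`
onto `(0, 1)` with `1 - y = e⁻ˣ / (2 cosh x)` and `dy = dx / (2 cosh² x)`. It turns
`∫ e^{wx} / cosh x dx` into the Beta integral `B(s, 1 - s)` with `s = (1 + w) / 2`, and Euler's
reflection formula gives `B(s, 1 - s) = Γ(s) Γ(1 - s) = π / sin (π s) = π / cos (π w / 2)`.
At `w = α + iω` one has `cos (π w / 2) = cosh (π (ω - iα) / 2)`, and `ψ` is the difference of the
cases `ω` and `ω = 0`.
-/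

open Set

lemma Complex.ofReal_exp_cpow (t : ℝ) (z : ℂ) : ((Real.exp t : ℝ) : ℂ) ^ z = cexp (t * z) := by
  rw [cpow_def_of_ne_zero (ofReal_ne_zero.mpr (Real.exp_pos t).ne'),
    ← ofReal_log (Real.exp_pos t).le, Real.log_exp]

lemma Complex.re_one_add_div_two_pos_and_re_one_sub_div_two_pos {w : ℂ} (hw : |w.re| < 1) :
    0 < ((1 + w) / 2).re ∧ 0 < ((1 - w) / 2).re := by
  obtain ⟨h₁, h₂⟩ := abs_lt.mp hw
  constructor <;> simp <;> linarith

lemma Real.sigmoid_two_mul (x : ℝ) :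
    sigmoid (2 * x) = Real.exp (x - Real.log (2 * Real.cosh x)) := by
  rw [Real.exp_sub, Real.exp_log (by positivity), sigmoid_def, Real.cosh_eq,
    show -(2 * x) = -x + -x by ring, Real.exp_add, Real.exp_neg]
  field_simp

lemma Real.hasDerivAt_sigmoid_two_mul (x : ℝ) :
    HasDerivAt (fun t => sigmoid (2 * t)) (1 / (2 * Real.cosh x ^ 2)) x := by
  refine ((hasDerivAt_sigmoid (2 * x)).comp x ((hasDerivAt_id x).const_mul 2)).congr_deriv ?_
  rw [← sigmoid_neg, sigmoid_def, sigmoid_def, Real.cosh_eq, neg_neg, show 2 * x = x + x by ring,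
    Real.exp_add, neg_add, Real.exp_add, Real.exp_neg]
  field_simp
  ring

lemma Real.injective_sigmoid_two_mul : Function.Injective fun x : ℝ => sigmoid (2 * x) :=
  sigmoid_injective.comp (mul_right_injective₀ two_ne_zero)

lemma Real.range_sigmoid_two_mul : range (fun x : ℝ => sigmoid (2 * x)) = Ioo 0 1 :=
  (mul_left_surjective₀ two_ne_zero).range_comp sigmoid ▸ range_sigmoid

/-- The Jacobian identity of the substitution `y = σ(2x)` in the Beta integral. -/
lemma abs_deriv_smul_betaIntegrand_sigmoid_two_mul (w : ℂ) (x : ℝ) :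
    |1 / (2 * Real.cosh x ^ 2)| • ((sigmoid (2 * x) : ℂ) ^ ((1 + w) / 2 - 1) *
      (1 - (sigmoid (2 * x) : ℂ)) ^ ((1 - w) / 2 - 1)) = cexp (w * x) / Complex.cosh x := by
  set L := Real.log (2 * Real.cosh x) with hL
  have hexpL : Real.exp L = 2 * Real.cosh x := Real.exp_log (by positivity)
  have hcosh : Complex.cosh x ≠ 0 := by
    rw [← ofReal_cosh]; exact ofReal_ne_zero.mpr (Real.cosh_pos x).ne'
  have hsub : 1 - (sigmoid (2 * x) : ℂ) = (Real.exp (-x - L) : ℂ) := by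
    rw [hL, ← Real.cosh_neg, ← sigmoid_two_mul, mul_neg, sigmoid_neg]; push_cast; ring
  rw [hsub, sigmoid_two_mul, ← hL, ofReal_exp_cpow, ofReal_exp_cpow, ← Complex.exp_add,
    abs_of_pos (by positivity), real_smul]
  have hexponent : ((x - L : ℝ) : ℂ) * ((1 + w) / 2 - 1) + ((-x - L : ℝ) : ℂ) * ((1 - w) / 2 - 1)
      = w * x + L := by push_cast; ring
  rw [hexponent, Complex.exp_add, ← ofReal_exp, hexpL]
  push_cast
  field_simp

lemma integrable_cexp_mul_div_cosh {w : ℂ} (hw : |w.re| < 1) :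
    Integrable (fun x : ℝ => cexp (w * x) / Complex.cosh x) := by
  obtain ⟨hs, ht⟩ := re_one_add_div_two_pos_and_re_one_sub_div_two_pos hw
  have hbeta := (intervalIntegrable_iff_integrableOn_Ioo_of_le zero_le_one).mp
    (betaIntegral_convergent hs ht)
  rw [← range_sigmoid_two_mul, ← image_univ, integrableOn_image_iff_integrableOn_abs_deriv_smul
    MeasurableSet.univ (fun x _ => (hasDerivAt_sigmoid_two_mul x).hasDerivWithinAt)
    injective_sigmoid_two_mul.injOn] at hbeta
  simpa only [abs_deriv_smul_betaIntegrand_sigmoid_two_mul, integrableOn_univ] using hbeta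

lemma integral_cexp_mul_div_cosh_eq_betaIntegral (w : ℂ) :
    ∫ x : ℝ, cexp (w * x) / Complex.cosh x = betaIntegral ((1 + w) / 2) ((1 - w) / 2) := by
  have h := integral_image_eq_integral_abs_deriv_smul MeasurableSet.univ
    (fun x _ => (hasDerivAt_sigmoid_two_mul x).hasDerivWithinAt)
    injective_sigmoid_two_mul.injOn
    (fun y : ℝ => (y : ℂ) ^ ((1 + w) / 2 - 1) * (1 - (y : ℂ)) ^ ((1 - w) / 2 - 1))
  rw [image_univ, range_sigmoid_two_mul, setIntegral_univ] at h
  simp only [abs_deriv_smul_betaIntegrand_sigmoid_two_mul] at h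
  rw [← h, betaIntegral, intervalIntegral.integral_of_le zero_le_one, integral_Ioc_eq_integral_Ioo]

lemma integral_cexp_mul_div_cosh {w : ℂ} (hw : |w.re| < 1) :
    ∫ x : ℝ, cexp (w * x) / Complex.cosh x = π / Complex.cos (π * w / 2) := by
  obtain ⟨hs, ht⟩ := re_one_add_div_two_pos_and_re_one_sub_div_two_pos hw
  have hbeta := Gamma_mul_Gamma_eq_betaIntegral hs ht
  rw [show (1 + w) / 2 + (1 - w) / 2 = 1 by ring, Complex.Gamma_one, one_mul,
    show (1 - w) / 2 = 1 - (1 + w) / 2 by ring, Complex.Gamma_mul_Gamma_one_sub] at hbeta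
  rw [integral_cexp_mul_div_cosh_eq_betaIntegral, show (1 - w) / 2 = 1 - (1 + w) / 2 by ring,
    ← hbeta, show (π : ℂ) * ((1 + w) / 2) = π * w / 2 + π / 2 by ring,
    Complex.sin_add_pi_div_two]

/-- For `α ∈ (−1, 1)` and `ω ∈ ℝ`, the function `x ↦ e^{iωx} e^{αx} sech x`
is integrable on `ℝ` with `∫ e^{iωx} e^{αx} sech x dx = π / cosh(π(ω − iα)/2)`.
Consequently, the characteristic exponent of the compound Poisson process with
jump measure `e^{αx} sech x dx`, namely `ψ(ω) = ∫ (e^{iωx} − 1) e^{αx} sech x dx`,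
equals `π/cosh(π(ω − iα)/2) − π/cos(πα/2)`. -/
theorem sech_jump_measure_characteristic_exponent
    (α : ℝ) (hα : α ∈ Set.Ioo (-1 : ℝ) 1) (ω : ℝ) :
    Integrable (fun x : ℝ =>
      Complex.exp (Complex.I * ω * x) * ((Real.exp (α * x) / Real.cosh x : ℝ) : ℂ)) ∧
    (∫ x : ℝ, Complex.exp (Complex.I * ω * x) *
        ((Real.exp (α * x) / Real.cosh x : ℝ) : ℂ)) =
      (π : ℂ) / Complex.cosh ((π : ℂ) * ((ω : ℂ) - Complex.I * α) / 2) ∧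
    (∫ x : ℝ, (Complex.exp (Complex.I * ω * x) - 1) *
        ((Real.exp (α * x) / Real.cosh x : ℝ) : ℂ)) =
      (π : ℂ) / Complex.cosh ((π : ℂ) * ((ω : ℂ) - Complex.I * α) / 2) -
        (π : ℂ) / ((Real.cos (π * α / 2) : ℝ) : ℂ) := by
  have hw : |((α : ℂ) + ω * I).re| < 1 := by simpa [abs_lt] using hα
  have hw₀ : |(α : ℂ).re| < 1 := by simpa [abs_lt] using hα
  have hsech (x : ℝ) :
      ((Real.exp (α * x) / Real.cosh x : ℝ) : ℂ) = cexp (α * x) / Complex.cosh x := by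
    rw [ofReal_div, ofReal_exp, ofReal_cosh, ofReal_mul]
  have htilt (x : ℝ) : cexp (I * ω * x) * ((Real.exp (α * x) / Real.cosh x : ℝ) : ℂ) =
      cexp ((α + ω * I) * x) / Complex.cosh x := by
    rw [hsech, ← mul_div_assoc, ← Complex.exp_add]; ring_nf
  have hcos : Complex.cos (π * (α + ω * I) / 2) = Complex.cosh (π * (ω - I * α) / 2) := by
    rw [← Complex.cos_mul_I]; congr 1; linear_combination (π * α / 2 : ℂ) * I_sq
  have hint := integrable_cexp_mul_div_cosh hw
  refine ⟨by simpa only [htilt] using hint,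
    by simp_rw [htilt, integral_cexp_mul_div_cosh hw, hcos], ?_⟩
  simp_rw [sub_mul, one_mul, htilt, hsech]
  rw [integral_sub hint (integrable_cexp_mul_div_cosh hw₀), integral_cexp_mul_div_cosh hw,
    integral_cexp_mul_div_cosh hw₀, hcos]
  norm_cast
end
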